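/- Let H_W be the Iwahori–Hecke algebra of a finite Coxeter group W over ℤ[q^{±1/2}], with standard generators T_s satisfying (T_s − q^{1/2})(T_s + q^{−1/2}) = 0. Let τ^+ (resp. τ^−) be the ℤ[q^{±1/2}]-linear functional sending T_w (resp. T_w^{−1}) to 1 if w = e and 0 otherwise. Then for the full twist π = T_{w_0}^2 and any element β of the braid group image in H_W, τ^−(β) = τ^+(βπ). -/

import Mathlib

/-!
Both sides are linear in `β`, so it suffices to compare them on the basis `T_w⁻¹`, on which `τ⁻`
is `δ_{w,1}`. Because `ℓ(w) + ℓ(w⁻¹w₀) = ℓ(w₀)`, `T_{w₀} = T_w T_{w⁻¹w₀}`, hence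
`T_w⁻¹ π = T_{w⁻¹w₀} T_{w₀}`. By induction on `ℓ(y)`, `τ⁺(T_x T_y) = δ_{xy,1}`: when `s` is a right
descent of `x`, the quadratic relation `T_s² = (q^{1/2} - q^{-1/2}) T_s + 1` splits `T_x T_s` into
two terms, and the first one cannot reach `1` for length reasons. As `w₀² = 1`, we get `δ_{w,1}`.

The length identity comes from counting inversions. Tits' cocycle, built from the action of `W`
on `W × ℤ/2`, shows that `ℓ(w)` is the number of reflections `t` with `ℓ(wt) < ℓ(w)`. Every
reflection is an inversion of `w₀`, and `t` is an inversion of `u w₀` iff `w₀ t w₀⁻¹` is not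
an inversion of `u`.
-/

open LaurentPolynomial

theorem Module.Basis.repr_apply_eq_repr_mul_apply {ι R A : Type*} [CommSemiring R] [Semiring A]
    [Algebra R A] (b b' : Module.Basis ι R A) (p : A) (i : ι)
    (h : ∀ j, b'.repr (b j * p) i = b.repr (b j) i) (x : A) :
    b.repr x i = b'.repr (x * p) i :=
  LinearMap.congr_fun (b.ext (f₁ := b.coord i) (f₂ := b'.coord i ∘ₗ LinearMap.mulRight R p)
    fun j => (h j).symm) x

theorem mul_self_eq_of_sub_mul_add_eq_zero {R H : Type*} [CommRing R] [Ring H] [Algebra R H]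
    {x : H} {a b : R} (hab : a * b = 1)
    (h : (x - algebraMap R H a) * (x + algebraMap R H b) = 0) :
    x * x = algebraMap R H (a - b) * x + 1 := by
  set A := algebraMap R H a
  set B := algebraMap R H b
  have hcomm : x * B = B * x := (Algebra.commutes b x).symm
  calc x * x = (x - A) * (x + B) + (A * x - x * B) + A * B := by noncomm_ring
    _ = algebraMap R H (a - b) * x + 1 := by
        rw [h, hcomm, ← map_mul, hab, map_one, map_sub, sub_mul, zero_add]

namespace CoxeterSystem

variable {B W : Type*} [Group W] {M : CoxeterMatrix B} (cs : CoxeterSystem M W)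

local prefix:100 "s" => cs.simple
local prefix:100 "π" => cs.wordProd
local prefix:100 "ℓ" => cs.length
local prefix:100 "ris" => cs.rightInvSeq

theorem leftInvSeq_alternatingWord_two_mul (i j : B) (p : ℕ) :
    cs.leftInvSeq (alternatingWord i j (2 * p))
      = (List.range (2 * p)).map fun k => π alternatingWord j i (2 * k + 1) :=
  List.ext_getElem (by simp) fun k hk _ => by
    rw [cs.getElem_leftInvSeq_alternatingWord i j p k (by simpa using hk), List.getElem_map,
      List.getElem_range]

section cocycle

variable [DecidableEq W]

theorem even_count_leftInvSeq_alternatingWord_two_mul_M (i j : B) (t : W) :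
    Even ((cs.leftInvSeq (alternatingWord i j (2 * M i j))).count t) := by
  have hperiodic : ∀ k, π alternatingWord j i (2 * (M i j + k) + 1)
      = π alternatingWord j i (2 * k + 1) := fun k => by
    simp [prod_alternatingWord_eq_mul_pow, Nat.mul_add_div, pow_add]
  rw [leftInvSeq_alternatingWord_two_mul, two_mul, List.range_add, List.map_append,
    List.count_append, List.map_map]
  simp only [Function.comp_def, hperiodic]
  exact ⟨_, rfl⟩

/-- Tits' action of `s i` on pairs (reflection, sign). -/
noncomputable def simpleReflectionPerm (i : B) : Equiv.Perm (W × ZMod 2) :=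
  Function.Involutive.toPerm (fun p => (s i * p.1 * s i, if p.1 = s i then p.2 + 1 else p.2)) <| by
    rintro ⟨t, ε⟩
    by_cases ht : t = s i
    · simp [ht, cs.simple_mul_simple_self, add_assoc, show (1 + 1 : ZMod 2) = 0 from rfl]
    · simp [ht, cs.simple_mul_simple_self, mul_assoc, mul_eq_one_iff_eq_inv, cs.inv_simple]

theorem simpleReflectionPerm_apply (i : B) (t : W) (ε : ZMod 2) :
    cs.simpleReflectionPerm i (t, ε) = (s i * t * s i, if t = s i then ε + 1 else ε) :=
  rfl

theorem prod_map_simpleReflectionPerm_apply (ω : List B) (t : W) (ε : ZMod 2) :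
    (ω.map cs.simpleReflectionPerm).prod (t, ε)
      = (π ω * t * (π ω)⁻¹, ε + (ris ω).count t) := by
  induction ω with
  | nil => simp
  | cons i ω ih =>
    have hcond : π ω * t * (π ω)⁻¹ = s i ↔ (π ω)⁻¹ * s i * π ω = t := by
      constructor <;> intro h
      · rw [← h]; group
      · rw [← h]; group
    rw [List.map_cons, List.prod_cons, Equiv.Perm.mul_apply, ih, simpleReflectionPerm_apply,
      rightInvSeq.eq_2, List.count_cons, cs.wordProd_cons]
    simp only [hcond, beq_iff_eq]
    refine Prod.ext (by simp [mul_assoc, cs.inv_simple]) ?_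
    split_ifs <;> push_cast <;> ring

theorem simpleReflectionPerm_isLiftable : M.IsLiftable cs.simpleReflectionPerm := by
  intro i j
  have hword : ∀ n, (cs.simpleReflectionPerm i * cs.simpleReflectionPerm j) ^ n
      = ((alternatingWord j i (2 * n)).reverse.map cs.simpleReflectionPerm).prod := by
    intro n
    induction n with
    | zero => simp [alternatingWord]
    | succ n ih =>
      rw [show 2 * (n + 1) = 2 * n + 1 + 1 by ring, alternatingWord_succ', alternatingWord_succ']
      simp [pow_succ, ih, parity_simps]
  ext ⟨t, ε⟩ : 1
  rw [hword, prod_map_simpleReflectionPerm_apply, rightInvSeq_reverse, List.count_reverse,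
    wordProd_reverse]
  obtain ⟨c, hc⟩ := cs.even_count_leftInvSeq_alternatingWord_two_mul_M j i t
  rw [M.symmetric] at hc
  simp [prod_alternatingWord_eq_mul_pow, hc, ← two_mul, show (2 : ZMod 2) = 0 from rfl]

noncomputable def reflectionRepresentation : W →* Equiv.Perm (W × ZMod 2) :=
  cs.lift ⟨cs.simpleReflectionPerm, cs.simpleReflectionPerm_isLiftable⟩

theorem reflectionRepresentation_wordProd (ω : List B) :
    cs.reflectionRepresentation (π ω) = (ω.map cs.simpleReflectionPerm).prod := by
  induction ω with
  | nil => simp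
  | cons i ω ih =>
    rw [cs.wordProd_cons, map_mul, ih, List.map_cons, List.prod_cons, reflectionRepresentation,
      cs.lift_apply_simple]

/-- Tits' reflection cocycle; it detects right inversions
(`isRightInversion_iff_reflectionCocycle_eq_one`). -/
noncomputable def reflectionCocycle (w t : W) : ZMod 2 := (cs.reflectionRepresentation w (t, 0)).2

theorem reflectionCocycle_wordProd (ω : List B) (t : W) :
    cs.reflectionCocycle (π ω) t = (ris ω).count t := by
  simp [reflectionCocycle, reflectionRepresentation_wordProd, prod_map_simpleReflectionPerm_apply]

theorem reflectionRepresentation_apply (w t : W) (ε : ZMod 2) :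
    cs.reflectionRepresentation w (t, ε) = (w * t * w⁻¹, ε + cs.reflectionCocycle w t) := by
  obtain ⟨ω, rfl⟩ := cs.wordProd_surjective w
  rw [reflectionRepresentation_wordProd, prod_map_simpleReflectionPerm_apply,
    reflectionCocycle_wordProd]

theorem reflectionCocycle_mul (x y t : W) :
    cs.reflectionCocycle (x * y) t
      = cs.reflectionCocycle y t + cs.reflectionCocycle x (y * t * y⁻¹) := by
  change (cs.reflectionRepresentation (x * y) (t, 0)).2 = _
  rw [map_mul, Equiv.Perm.mul_apply, reflectionRepresentation_apply, reflectionRepresentation_apply,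
    zero_add]

theorem reflectionCocycle_inv (w t : W) :
    cs.reflectionCocycle w⁻¹ (w * t * w⁻¹) = cs.reflectionCocycle w t := by
  have h := cs.reflectionCocycle_mul w⁻¹ w t
  rw [inv_mul_cancel, reflectionCocycle, map_one, Equiv.Perm.one_apply, eq_comm,
    CharTwo.add_eq_zero] at h
  exact h.symm

theorem reflectionCocycle_self {t : W} (ht : cs.IsReflection t) : cs.reflectionCocycle t t = 1 := by
  obtain ⟨w, i, rfl⟩ := ht
  have hsimple : cs.reflectionCocycle (s i) (s i) = 1 := by
    simpa using cs.reflectionCocycle_wordProd [i] (s i)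
  have hconj : w⁻¹ * (w * s i * w⁻¹) * w⁻¹⁻¹ = s i := by group
  rw [reflectionCocycle_mul, reflectionCocycle_inv, reflectionCocycle_mul, hconj,
    show s i * s i * (s i)⁻¹ = s i by group, hsimple, add_left_comm, CharTwo.add_self_eq_zero,
    add_zero]

theorem mem_rightInvSeq_of_reflectionCocycle_eq_one {ω : List B} {t : W}
    (h : cs.reflectionCocycle (π ω) t = 1) : t ∈ ris ω := by
  rw [reflectionCocycle_wordProd] at h
  refine List.count_pos_iff.mp (Nat.pos_of_ne_zero fun h0 => ?_)
  rw [h0, Nat.cast_zero] at h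
  exact zero_ne_one h

theorem isRightInversion_of_reflectionCocycle_eq_one {w t : W} (h : cs.reflectionCocycle w t = 1) :
    cs.IsRightInversion w t := by
  obtain ⟨ω, hω, rfl⟩ := cs.exists_isReduced w
  exact cs.isRightInversion_of_mem_rightInvSeq hω (cs.mem_rightInvSeq_of_reflectionCocycle_eq_one h)

theorem isRightInversion_iff_reflectionCocycle_eq_one {w t : W} (ht : cs.IsReflection t) :
    cs.IsRightInversion w t ↔ cs.reflectionCocycle w t = 1 := by
  refine ⟨fun hwt => ?_, cs.isRightInversion_of_reflectionCocycle_eq_one⟩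
  have htt : w * t * t = w := by rw [mul_assoc, ht.mul_self, mul_one]
  have hne : cs.reflectionCocycle (w * t) t ≠ 1 := fun h => by
    have := (cs.isRightInversion_of_reflectionCocycle_eq_one h).2
    rw [htt] at this
    exact absurd hwt.2 (by omega)
  have h := cs.reflectionCocycle_mul (w * t) t t
  rw [htt, reflectionCocycle_self cs ht, show t * t * t⁻¹ = t by group] at h
  rw [h]
  generalize cs.reflectionCocycle (w * t) t = a at hne
  revert a
  decide

end cocycle

theorem setOf_isRightInversion_wordProd {ω : List B} (hω : cs.IsReduced ω) :
    {t | cs.IsRightInversion (π ω) t} = {t | t ∈ ris ω} := by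
  classical
  ext t
  exact ⟨fun h => cs.mem_rightInvSeq_of_reflectionCocycle_eq_one
    ((isRightInversion_iff_reflectionCocycle_eq_one _ h.1).mp h),
    cs.isRightInversion_of_mem_rightInvSeq hω⟩

theorem finite_setOf_isRightInversion (w : W) : {t | cs.IsRightInversion w t}.Finite := by
  obtain ⟨ω, hω, rfl⟩ := cs.exists_isReduced w
  rw [cs.setOf_isRightInversion_wordProd hω]
  exact List.finite_toSet _

theorem length_eq_ncard_setOf_isRightInversion (w : W) :
    ℓ w = {t | cs.IsRightInversion w t}.ncard := by
  classical
  obtain ⟨ω, hω, rfl⟩ := cs.exists_isReduced w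
  rw [cs.setOf_isRightInversion_wordProd hω, ← List.coe_toFinset, Set.ncard_coe_finset,
    List.toFinset_card_of_nodup hω.nodup_rightInvSeq, length_rightInvSeq, hω.eq]

theorem isRightInversion_of_forall_length_le {w₀ t : W} (hmax : ∀ w, ℓ w ≤ ℓ w₀)
    (ht : cs.IsReflection t) : cs.IsRightInversion w₀ t :=
  ⟨ht, (hmax _).lt_of_ne (ht.length_mul_left_ne w₀)⟩

theorem length_mul_add_length_of_forall_length_le {w₀ : W} (hmax : ∀ w, ℓ w ≤ ℓ w₀) (u : W) :
    ℓ (u * w₀) + ℓ u = ℓ w₀ := by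
  classical
  let c : W → W := fun t => w₀ * t * w₀⁻¹
  have hinv : {t | cs.IsRightInversion (u * w₀) t}
      = {t | cs.IsRightInversion w₀ t} \ c ⁻¹' {t | cs.IsRightInversion u t} := by
    ext t
    by_cases ht : cs.IsReflection t
    · have hw₀ := cs.isRightInversion_of_forall_length_le hmax ht
      simp only [Set.mem_ofPred_eq, Set.mem_sdiff, Set.mem_preimage, c, hw₀, true_and,
        isRightInversion_iff_reflectionCocycle_eq_one _ ht,
        isRightInversion_iff_reflectionCocycle_eq_one _ (ht.conj w₀), reflectionCocycle_mul,
        (isRightInversion_iff_reflectionCocycle_eq_one _ ht).mp hw₀]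
      generalize cs.reflectionCocycle u (w₀ * t * w₀⁻¹) = a
      revert a
      decide
    · simp [IsRightInversion, ht]
  have hsub : c ⁻¹' {t | cs.IsRightInversion u t} ⊆ {t | cs.IsRightInversion w₀ t} :=
    fun t h => cs.isRightInversion_of_forall_length_le hmax <| by simpa [c] using h.1
  have hcard : (c ⁻¹' {t | cs.IsRightInversion u t}).ncard = ℓ u := by
    rw [Set.ncard_preimage_of_injective_subset_range (f := c) (MulAut.conj w₀).injective
      fun t _ => ⟨w₀⁻¹ * t * w₀, by simp [c, mul_assoc]⟩, cs.length_eq_ncard_setOf_isRightInversion]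
  rw [cs.length_eq_ncard_setOf_isRightInversion (u * w₀), hinv, ← hcard,
    cs.length_eq_ncard_setOf_isRightInversion w₀]
  exact Set.ncard_sdiff_add_ncard_of_subset hsub (cs.finite_setOf_isRightInversion w₀)

theorem mul_self_eq_one_of_forall_length_le {w₀ : W} (hmax : ∀ w, ℓ w ≤ ℓ w₀) : w₀ * w₀ = 1 :=
  cs.length_eq_zero_iff.mp (by have := cs.length_mul_add_length_of_forall_length_le hmax w₀; omega)

def IsLengthMultiplicative {G : Type*} [Monoid G] (f : W → G) : Prop :=
  ∀ w w' : W, ℓ (w * w') = ℓ w + ℓ w' → f (w * w') = f w * f w'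

variable {cs} in
theorem IsLengthMultiplicative.map_one {G : Type*} [Group G] {f : W → G}
    (hf : cs.IsLengthMultiplicative f) : f 1 = 1 := by
  simpa using hf 1 1 (by simp)

section hecke

variable {R H : Type*} [CommRing R] [Ring H] [Algebra R H] {Tb : W → Hˣ} {c : R}

theorem mul_simple_of_isRightDescent (hmul : cs.IsLengthMultiplicative Tb)
    (hquad : ∀ i, (Tb (s i) : H) * Tb (s i) = algebraMap R H c * Tb (s i) + 1)
    {x : W} {i : B} (hx : cs.IsRightDescent x i) :
    (Tb x : H) * Tb (s i) = algebraMap R H c * Tb x + Tb (x * s i) := by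
  have hsplit : Tb x = Tb (x * s i) * Tb (s i) := by
    have h := hmul (x * s i) (s i) (by
      rw [mul_assoc, cs.simple_mul_simple_self, mul_one, cs.length_simple,
        cs.isRightDescent_iff.mp hx])
    rwa [mul_assoc, cs.simple_mul_simple_self, mul_one] at h
  rw [hsplit, Units.val_mul, mul_assoc, hquad, mul_add, mul_one, ← mul_assoc,
    ← Algebra.commutes, mul_assoc]

theorem repr_mul_apply_one [DecidableEq W] (b : Module.Basis W R H) (hb : ∀ w, b w = Tb w)
    (hmul : cs.IsLengthMultiplicative Tb)
    (hquad : ∀ i, (Tb (s i) : H) * Tb (s i) = algebraMap R H c * Tb (s i) + 1) (x y : W) :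
    b.repr (Tb x * Tb y) 1 = if x * y = 1 then 1 else 0 := by
  obtain ⟨ω, hω, rfl⟩ := cs.exists_isReduced y
  induction ω generalizing x with
  | nil =>
    rw [wordProd_nil, hmul.map_one, Units.val_one, mul_one, mul_one,
      ← hb, b.repr_self, Finsupp.single_apply]
  | cons i ω ih =>
    have hω' : cs.IsReduced ω := hω.drop 1
    have hsplit : Tb (π (i :: ω)) = Tb (s i) * Tb (π ω) := by
      rw [wordProd_cons]
      refine hmul _ _ ?_
      rw [← wordProd_cons, hω.eq, hω'.eq, cs.length_simple, List.length_cons, add_comm]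
    have hassoc : x * s i * π ω = x * π (i :: ω) := by rw [mul_assoc, wordProd_cons]
    rw [hsplit, Units.val_mul, ← mul_assoc, ← hassoc]
    rcases cs.length_mul_simple x i with hasc | hdesc
    · rw [← Units.val_mul, ← hmul x (s i) (by rw [hasc, cs.length_simple]), ih _ hω']
    · have hne : x * π ω ≠ 1 := by
        intro h
        have hx : x = (π ω)⁻¹ := eq_inv_of_mul_eq_one_left h
        have hxs : x * s i = (π (i :: ω))⁻¹ := by rw [hx, wordProd_cons, mul_inv_rev, inv_simple]
        rw [hxs, cs.length_inv, hω.eq, hx, cs.length_inv, hω'.eq, List.length_cons] at hdesc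
        omega
      rw [cs.mul_simple_of_isRightDescent hmul hquad (cs.isRightDescent_iff.mpr hdesc), add_mul,
        map_add, Finsupp.add_apply, mul_assoc, ← Algebra.smul_def, map_smul, Finsupp.smul_apply,
        ih _ hω', ih _ hω', if_neg hne, smul_zero, zero_add]

theorem repr_inv_mul_sq_apply_one [DecidableEq W] {w₀ : W} (hmax : ∀ w, ℓ w ≤ ℓ w₀)
    (b : Module.Basis W R H) (hb : ∀ w, b w = Tb w) (hmul : cs.IsLengthMultiplicative Tb)
    (hquad : ∀ i, (Tb (s i) : H) * Tb (s i) = algebraMap R H c * Tb (s i) + 1) (w : W) :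
    b.repr ((↑(Tb w)⁻¹ : H) * (Tb w₀ : H) ^ 2) 1 = if w = 1 then 1 else 0 := by
  have hsplit : Tb w₀ = Tb w * Tb (w⁻¹ * w₀) := by
    have h := hmul w (w⁻¹ * w₀) (by
      rw [mul_inv_cancel_left, ← cs.length_mul_add_length_of_forall_length_le hmax w⁻¹,
        cs.length_inv, add_comm])
    rwa [mul_inv_cancel_left] at h
  have hcancel : (↑(Tb w)⁻¹ : H) * (Tb w₀ : H) ^ 2 = Tb (w⁻¹ * w₀) * Tb w₀ := by
    nth_rw 1 [sq, hsplit]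
    rw [Units.val_mul, ← mul_assoc, ← mul_assoc, Units.inv_mul, one_mul]
  rw [hcancel, cs.repr_mul_apply_one b hb hmul hquad, mul_assoc,
    cs.mul_self_eq_one_of_forall_length_le hmax, mul_one]
  simp only [inv_eq_one]

end hecke

end CoxeterSystem

theorem stmt13_general {I W : Type*} [Group W] (M : CoxeterMatrix I)
    (cs : CoxeterSystem M W) (w₀ : W) (hmax : ∀ w : W, cs.length w ≤ cs.length w₀)
    {H : Type*} [Ring H] [Algebra (LaurentPolynomial ℤ) H]
    (Tb : W → Hˣ)
    (hmul : ∀ w w' : W, cs.length (w * w') = cs.length w + cs.length w' →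
      Tb (w * w') = Tb w * Tb w')
    (hquad : ∀ s : W, cs.length s = 1 →
      ((Tb s : H) - algebraMap (LaurentPolynomial ℤ) H (T 1)) *
        ((Tb s : H) + algebraMap (LaurentPolynomial ℤ) H (T (-1))) = 0)
    (b b' : Module.Basis W (LaurentPolynomial ℤ) H)
    (hb : ∀ w : W, b w = (Tb w : H)) (hb' : ∀ w : W, b' w = ((Tb w)⁻¹ : Hˣ)) :
    ∀ β : Hˣ, β ∈ Subgroup.closure (Set.range Tb) →
      b'.repr (β : H) 1 = b.repr ((β : H) * (Tb w₀ : H) ^ 2) 1 := by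
  intro β _
  classical
  have hquad' (i : I) : (Tb (cs.simple i) : H) * Tb (cs.simple i)
      = algebraMap _ H (T 1 - T (-1)) * Tb (cs.simple i) + 1 :=
    mul_self_eq_of_sub_mul_add_eq_zero (by rw [← T_add]; simp) (hquad _ (cs.length_simple i))
  refine b'.repr_apply_eq_repr_mul_apply b _ 1 (fun w => ?_) β
  rw [hb', cs.repr_inv_mul_sq_apply_one hmax b hb hmul hquad', ← hb', b'.repr_self,
    Finsupp.single_apply]

/-- Kálmán-type duality for the Iwahori–Hecke algebra of a finite Coxeter group
`W` over `ℤ[q^{±1/2}]` (here `q^{1/2}` is the Laurent variable `T 1`): with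
`τ⁺`, `τ⁻` the coefficient-of-`T_e` functionals for the bases `{T_w}` and
`{T_w⁻¹}`, and `π = T_{w₀}²` the full twist, one has `τ⁻(β) = τ⁺(βπ)` for every
element `β` of the image of the braid group (the subgroup of units generated by
the `T_w`). -/
theorem stmt13 {I W : Type*} [Group W] [Finite W] (M : CoxeterMatrix I)
    (cs : CoxeterSystem M W) (w₀ : W) (hmax : ∀ w : W, cs.length w ≤ cs.length w₀)
    {H : Type*} [Ring H] [Algebra (LaurentPolynomial ℤ) H]
    (Tb : W → Hˣ) (hT1 : Tb 1 = 1)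
    (hmul : ∀ w w' : W, cs.length (w * w') = cs.length w + cs.length w' →
      Tb (w * w') = Tb w * Tb w')
    (hquad : ∀ s : W, cs.length s = 1 →
      ((Tb s : H) - algebraMap (LaurentPolynomial ℤ) H (T 1)) *
        ((Tb s : H) + algebraMap (LaurentPolynomial ℤ) H (T (-1))) = 0)
    (b b' : Module.Basis W (LaurentPolynomial ℤ) H)
    (hb : ∀ w : W, b w = (Tb w : H)) (hb' : ∀ w : W, b' w = ((Tb w)⁻¹ : Hˣ)) :
    ∀ β : Hˣ, β ∈ Subgroup.closure (Set.range Tb) →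
      b'.repr (β : H) 1 = b.repr ((β : H) * (Tb w₀ : H) ^ 2) 1 :=
  stmt13_general M cs w₀ hmax Tb hmul hquad b b' hb hb'
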